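/- For positive definite matrices Σ₀ and Σ_f, the matrix S = Σ₀^{1/2}(Σ₀^{1/2} Σ_f Σ₀^{1/2})^{1/2} Σ₀^{-1/2} satisfies the positive semidefinite block constraint: the block matrix [[Σ₀, S],[Sᵀ, Σ_f]] is positive semidefinite. -/

import Mathlib

/-!
Write `A = Σ₀^{1/2}` and `M = (A Σ_f A)^{1/2}`, both Hermitian, so that `S = A M A⁻¹`. The block
matrix is the Gram matrix `[A, M A⁻¹]ᴴ [A, M A⁻¹]`: its diagonal blocks are `A A = Σ₀` and
`A⁻¹ M M A⁻¹ = A⁻¹ (A Σ_f A) A⁻¹ = Σ_f`, and its off-diagonal block is `A M A⁻¹ = S`.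
-/

set_option autoImplicit false
open Matrix
noncomputable section

open scoped ComplexOrder in
/-- `Matrix.PosSemidef.sqrt` was removed from Mathlib; restored here with its old definition. -/
def Matrix.PosSemidef.sqrt {n : Type*} [Fintype n] [DecidableEq n] {𝕜 : Type*} [RCLike 𝕜]
    {A : Matrix n n 𝕜} (hA : PosSemidef A) : Matrix n n 𝕜 :=
  hA.1.eigenvectorUnitary.1 * diagonal ((↑) ∘ (√·) ∘ hA.1.eigenvalues) *
    (star hA.1.eigenvectorUnitary : Matrix n n 𝕜)

open scoped ComplexOrder in
theorem Matrix.PosSemidef.posSemidef_sqrt {n : Type*} [Fintype n] [DecidableEq n] {𝕜 : Type*}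
    [RCLike 𝕜] {A : Matrix n n 𝕜} (hA : PosSemidef A) : PosSemidef hA.sqrt := by
  have hD : (diagonal ((RCLike.ofReal : ℝ → 𝕜) ∘ (√·) ∘ hA.1.eigenvalues)).PosSemidef := by
    rw [Matrix.posSemidef_diagonal_iff]
    intro i
    simp only [Function.comp_apply, RCLike.ofReal_nonneg]
    exact Real.sqrt_nonneg _
  have := hD.mul_mul_conjTranspose_same (hA.1.eigenvectorUnitary : Matrix n n 𝕜)
  unfold Matrix.PosSemidef.sqrt
  simpa [Matrix.star_eq_conjTranspose] using this

/-- The middle matrix `Σ₀^{1/2} Σf Σ₀^{1/2}` is positive semidefinite. -/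
theorem midPosSemidef {n : ℕ} {S0 Sf : Matrix (Fin n) (Fin n) ℝ}
    (h0 : S0.PosDef) (hf : Sf.PosDef) :
    (h0.posSemidef.sqrt * Sf * h0.posSemidef.sqrt).PosSemidef := by
  have h := hf.posSemidef.mul_mul_conjTranspose_same h0.posSemidef.sqrt
  rwa [h0.posSemidef.posSemidef_sqrt.isHermitian] at h

open scoped ComplexOrder

namespace Matrix

variable {n 𝕜 : Type*} [Fintype n] [RCLike 𝕜]

theorem posSemidef_fromBlocks_gram {m p : Type*} [Fintype m] [Fintype p]
    (B : Matrix m n 𝕜) (C : Matrix m p 𝕜) :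
    (fromBlocks (Bᴴ * B) (Bᴴ * C) (Bᴴ * C)ᴴ (Cᴴ * C)).PosSemidef := by
  rw [conjTranspose_mul, conjTranspose_conjTranspose, ← fromRows_mul_fromCols,
    ← conjTranspose_fromCols_eq_fromRows_conjTranspose]
  exact posSemidef_conjTranspose_mul_self _

variable [DecidableEq n]

theorem PosSemidef.sqrt_eq_cfc {A : Matrix n n 𝕜} (hA : A.PosSemidef) :
    hA.sqrt = cfc Real.sqrt A := by
  rw [hA.1.cfc_eq, IsHermitian.cfc, Unitary.conjStarAlgAut_apply]
  rfl

theorem PosSemidef.sqrt_mul_self {A : Matrix n n 𝕜} (hA : A.PosSemidef) :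
    hA.sqrt * hA.sqrt = A := by
  rw [hA.sqrt_eq_cfc, ← cfc_mul ..]
  conv_rhs => rw [← cfc_id' ℝ A hA.1]
  refine cfc_congr fun x hx => ?_
  obtain ⟨i, rfl⟩ := (hA.1.spectrum_real_eq_range_eigenvalues ▸ hx :)
  exact Real.mul_self_sqrt (hA.eigenvalues_nonneg i)

theorem IsHermitian.conjTranspose_mul_nonsing_inv_mul_self {A M D : Matrix n n 𝕜}
    (hA : A.IsHermitian) (hAdet : IsUnit A.det) (hM : M.IsHermitian) (hMM : M * M = A * D * A) :
    (M * A⁻¹)ᴴ * (M * A⁻¹) = D := by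
  rw [conjTranspose_mul, hM.eq, hA.inv.eq]
  calc A⁻¹ * M * (M * A⁻¹) = A⁻¹ * (M * M) * A⁻¹ := by simp only [Matrix.mul_assoc]
    _ = (A⁻¹ * A) * D * (A * A⁻¹) := by rw [hMM]; simp only [Matrix.mul_assoc]
    _ = D := by
      rw [nonsing_inv_mul A hAdet, mul_nonsing_inv A hAdet, Matrix.one_mul, Matrix.mul_one]

theorem posSemidef_fromBlocks_of_sqrt {S₀ S₁ A M : Matrix n n 𝕜}
    (hA : A.IsHermitian) (hAA : A * A = S₀) (hAdet : IsUnit A.det)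
    (hM : M.IsHermitian) (hMM : M * M = A * S₁ * A) :
    (fromBlocks S₀ (A * M * A⁻¹) (A * M * A⁻¹)ᴴ S₁).PosSemidef := by
  have hgram := posSemidef_fromBlocks_gram A (M * A⁻¹)
  rwa [hA.eq, hAA, ← Matrix.mul_assoc, hA.conjTranspose_mul_nonsing_inv_mul_self hAdet hM hMM]
    at hgram

end Matrix

/-- the block matrix [[Σ₀, S],[Sᵀ, Σf]] with
`S = Σ₀^{1/2} (Σ₀^{1/2} Σf Σ₀^{1/2})^{1/2} Σ₀^{-1/2}` is positive semidefinite. -/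
theorem stmt0 {n : ℕ} (S0 Sf : Matrix (Fin n) (Fin n) ℝ)
    (h0 : S0.PosDef) (hf : Sf.PosDef) :
    (Matrix.fromBlocks S0
      (h0.posSemidef.sqrt * (midPosSemidef h0 hf).sqrt * (h0.posSemidef.sqrt)⁻¹)
      (h0.posSemidef.sqrt * (midPosSemidef h0 hf).sqrt * (h0.posSemidef.sqrt)⁻¹)ᵀ
      Sf).PosSemidef := by
  have hAA := h0.posSemidef.sqrt_mul_self
  have hAdet : IsUnit h0.posSemidef.sqrt.det :=
    (isUnit_iff_isUnit_det _).mp (isUnit_of_mul_isUnit_left (hAA ▸ h0.isUnit))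
  rw [← conjTranspose_eq_transpose_of_trivial]
  exact posSemidef_fromBlocks_of_sqrt h0.posSemidef.posSemidef_sqrt.isHermitian hAA hAdet
    (midPosSemidef h0 hf).posSemidef_sqrt.isHermitian (midPosSemidef h0 hf).sqrt_mul_self
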